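/- arXiv:1403.4692 — 4 statements merged into one kernel-verified Lean document; each statement's English description precedes it below -/
import Mathlib

section
/- With the same setting and constants, for every i ≥ 1 and positive integer m: P(Dᵢ < m(μ₀−a)/4) ≤ exp(−(a−μ₀)²·i/(16c₁) − (a−μ₀)²·m/(16c₁)), and hence ∑_{i=1}^∞ P(Dᵢ < m(μ₀−a)/4) ≤ exp(−(a−μ₀)²·m/(16c₁)) / (exp((a−μ₀)²/(16c₁)) − 1). -/
/-!
Chernoff: for `0 < r ≤ θa` the hypothesis on the moment generating function gives
`P(Dᵢ ≤ t) ≤ exp (r t - i K)` with `K = Ψ θa - Ψ r - Ψ (θa - r)`. Two mean value estimates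
with `Ψ'' ≤ c₁` give `K ≥ r (a - μ₀) - 2 c₁ r²`, which for `r = (a - μ₀) / (4 c₁)` is at least
`(a - μ₀)² / (16 c₁)`. The series bound is then a geometric sum.
-/

open MeasureTheory ProbabilityTheory Real Set Finset

section MeanValue

variable {f f' : ℝ → ℝ} {x y C : ℝ}

lemma sub_le_mul_sub_of_hasDerivAt_le (hxy : x ≤ y)
    (hf : ∀ z ∈ Icc x y, HasDerivAt f (f' z) z) (hC : ∀ z ∈ Ioo x y, f' z ≤ C) :
    f y - f x ≤ C * (y - x) := by
  rcases hxy.eq_or_lt with rfl | hlt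
  · simp
  obtain ⟨z, hz, hslope⟩ := exists_hasDerivAt_eq_slope f f' hlt
    (fun w hw => (hf w hw).continuousAt.continuousWithinAt)
    (fun w hw => hf w (Ioo_subset_Icc_self hw))
  have := hC z hz
  rwa [hslope, div_le_iff₀ (sub_pos.2 hlt)] at this

lemma mul_sub_le_sub_of_le_hasDerivAt (hxy : x ≤ y)
    (hf : ∀ z ∈ Icc x y, HasDerivAt f (f' z) z) (hC : ∀ z ∈ Ioo x y, C ≤ f' z) :
    C * (y - x) ≤ f y - f x := by
  have := sub_le_mul_sub_of_hasDerivAt_le (f := fun w => -f w) (f' := fun w => -f' w) (C := -C)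
    hxy (fun z hz => (hf z hz).neg) (fun z hz => neg_le_neg (hC z hz))
  linarith

end MeanValue

lemma mul_sub_sub_le_of_deriv2_le {Ψ Ψ' Ψ'' : ℝ → ℝ} {θa c r : ℝ}
    (hΨ : ∀ θ ∈ Icc 0 θa, HasDerivAt Ψ (Ψ' θ) θ)
    (hΨ' : ∀ θ ∈ Icc 0 θa, HasDerivAt Ψ' (Ψ'' θ) θ)
    (hc : ∀ θ ∈ Icc 0 θa, Ψ'' θ ≤ c) (hc0 : 0 ≤ c) (hr0 : 0 ≤ r) (hrθ : r ≤ θa) :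
    r * (Ψ' θa - Ψ' 0) - 2 * c * r ^ 2 ≤ (Ψ θa - Ψ (θa - r)) - (Ψ r - Ψ 0) := by
  have lip : ∀ x y, 0 ≤ x → x ≤ y → y ≤ θa → Ψ' y - Ψ' x ≤ c * (y - x) :=
    fun x y hx hxy hy => sub_le_mul_sub_of_hasDerivAt_le hxy
      (fun z hz => hΨ' z ⟨hx.trans hz.1, hz.2.trans hy⟩)
      (fun z hz => hc z ⟨hx.trans hz.1.le, hz.2.le.trans hy⟩)
  have upper : Ψ r - Ψ 0 ≤ (Ψ' 0 + c * r) * (r - 0) :=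
    sub_le_mul_sub_of_hasDerivAt_le hr0 (fun z hz => hΨ z ⟨hz.1, hz.2.trans hrθ⟩)
      fun z hz => by
        have := lip 0 z le_rfl hz.1.le (hz.2.le.trans hrθ)
        nlinarith [hz.2]
  have lower : (Ψ' θa - c * r) * (θa - (θa - r)) ≤ Ψ θa - Ψ (θa - r) :=
    mul_sub_le_sub_of_le_hasDerivAt (by linarith)
      (fun z hz => hΨ z ⟨by linarith [hz.1], hz.2⟩)
      fun z hz => by
        have := lip z θa (by linarith [hz.1]) hz.2.le le_rfl
        nlinarith [hz.1]
  nlinarith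

lemma sq_div_le_sub_sub_of_deriv2_le {Ψ Ψ' Ψ'' : ℝ → ℝ} {θa c : ℝ}
    (hΨ : ∀ θ ∈ Icc 0 θa, HasDerivAt Ψ (Ψ' θ) θ)
    (hΨ' : ∀ θ ∈ Icc 0 θa, HasDerivAt Ψ' (Ψ'' θ) θ)
    (hc : ∀ θ ∈ Icc 0 θa, Ψ'' θ ≤ c) (hc0 : 0 < c) (hδ : 0 ≤ Ψ' θa - Ψ' 0)
    (hrθ : (Ψ' θa - Ψ' 0) / (4 * c) ≤ θa) :
    (Ψ' θa - Ψ' 0) ^ 2 / (8 * c) ≤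
      (Ψ θa - Ψ (θa - (Ψ' θa - Ψ' 0) / (4 * c))) - (Ψ ((Ψ' θa - Ψ' 0) / (4 * c)) - Ψ 0) := by
  refine le_of_eq_of_le ?_ (mul_sub_sub_le_of_deriv2_le hΨ hΨ' hc hc0.le (by positivity) hrθ)
  field_simp
  ring

lemma measureReal_sum_le_le_exp {Ω ι : Type*} [MeasurableSpace Ω] {P : Measure Ω}
    {ξ : ι → Ω → ℝ} (hindep : iIndepFun ξ P) (hmeas : ∀ i, Measurable (ξ i))
    {r K : ℝ} (hr : 0 ≤ r) (hmgf : ∀ i, mgf (ξ i) P (-r) = exp (-K)) (s : Finset ι) (ε : ℝ) :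
    P.real {ω | ∑ i ∈ s, ξ i ω ≤ ε} ≤ exp (r * ε - K * #s) := by
  have := hindep.isProbabilityMeasure
  have hint : ∀ i ∈ s, Integrable (fun ω => exp (-r * ξ i ω)) P :=
    fun i _ => mgf_pos_iff.1 ((hmgf i).symm ▸ exp_pos _)
  have := measure_le_le_exp_mul_mgf ε (neg_nonpos.2 hr)
    (hindep.integrable_exp_mul_sum hmeas hint)
  rw [hindep.mgf_sum hmeas, prod_congr rfl fun i _ => hmgf i, prod_const, ← exp_nat_mul,
    ← exp_add, neg_neg] at this
  simpa only [Finset.sum_apply, mul_neg, mul_comm, ← sub_eq_add_neg] using this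

lemma tsum_le_exp_div_exp_sub_one {f : ℕ → ℝ} {α β : ℝ} (hα : 0 < α) (hf0 : ∀ i, 0 ≤ f i)
    (hf : ∀ i : ℕ, f i ≤ exp (-α * (i + 1) - β)) :
    ∑' i, f i ≤ exp (-β) / (exp α - 1) := by
  have hq1 : exp (-α) < 1 := exp_lt_one_iff.2 (neg_neg_of_pos hα)
  have hgeom : HasSum (fun i : ℕ => exp (-β) * exp (-α) * exp (-α) ^ i)
      (exp (-β) / (exp α - 1)) := by
    have hsum : exp (-β) * exp (-α) * (1 - exp (-α))⁻¹ = exp (-β) / (exp α - 1) := by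
      have : exp α - 1 ≠ 0 := (sub_pos.2 (one_lt_exp_iff.2 hα)).ne'
      rw [exp_neg α]
      field_simp
    exact hsum ▸ (hasSum_geometric_of_lt_one (exp_pos _).le hq1).mul_left _
  have hle : ∀ i : ℕ, f i ≤ exp (-β) * exp (-α) * exp (-α) ^ i := fun i => by
    convert hf i using 1
    rw [← exp_nat_mul, ← exp_add, ← exp_add]
    ring_nf
  exact hasSum_le hle (Summable.of_nonneg_of_le hf0 hle hgeom.summable).hasSum hgeom

lemma le_max_sSup_image_of_mem {g : ℝ → ℝ} {s : Set ℝ} (hs : IsCompact s) (hg : ContinuousOn g s)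
    (b : ℝ) {θ : ℝ} (hθ : θ ∈ s) : g θ ≤ max b (sSup (g '' s)) :=
  (le_csSup (hs.image_of_continuousOn hg).bddAbove (mem_image_of_mem g hθ)).trans (le_max_right _ _)

theorem stmt5_general {Ω : Type*} [MeasurableSpace Ω] (P : Measure Ω) [IsProbabilityMeasure P]
    (Θ : Set ℝ)
    (Ψ Ψ' Ψ'' : ℝ → ℝ) (μ₀ a θa : ℝ)
    (hsub : Set.Icc 0 θa ⊆ Θ)
    (hderiv1 : ∀ θ ∈ Θ, HasDerivAt Ψ (Ψ' θ) θ)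
    (hderiv2 : ∀ θ ∈ Θ, HasDerivAt Ψ' (Ψ'' θ) θ)
    (hcont : ContinuousOn Ψ'' (Set.Icc 0 θa))
    (hΨ0 : Ψ 0 = 0) (hΨ'0 : Ψ' 0 = μ₀) (hΨ'θa : Ψ' θa = a)
    (ha : μ₀ < a) (hθa : 0 < θa)
    (ξ : ℕ → Ω → ℝ) (hmeas : ∀ i, Measurable (ξ i))
    (hindep : iIndepFun ξ P)
    (hmgf : ∀ i, ∀ r : ℝ, 0 < r → r ≤ θa →
      mgf (ξ i) P (-r) = exp (-(Ψ θa - Ψ r - Ψ (θa - r))))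
    (D : ℕ → Ω → ℝ) (hD : ∀ k ω, D k ω = ∑ i ∈ Finset.range k, ξ i ω)
    (m : ℕ)
    (c₁ : ℝ) (hc₁ : c₁ = max ((a - μ₀) / (4 * θa)) (sSup (Ψ'' '' Set.Icc 0 θa))) :
    (∀ i : ℕ, 1 ≤ i →
        (P {ω | D i ω < m * (μ₀ - a) / 4}).toReal ≤
          exp (-(a - μ₀) ^ 2 * i / (16 * c₁) - (a - μ₀) ^ 2 * m / (16 * c₁))) ∧
      (∑' i : ℕ, (P {ω | D (i + 1) ω < m * (μ₀ - a) / 4}).toReal) ≤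
        exp (-(a - μ₀) ^ 2 * m / (16 * c₁)) / (exp ((a - μ₀) ^ 2 / (16 * c₁)) - 1) := by
  have hgap : 0 < a - μ₀ := sub_pos.2 ha
  have hc₁θ : (a - μ₀) / (4 * θa) ≤ c₁ := hc₁ ▸ le_max_left _ _
  have hc₁pos : 0 < c₁ := (div_pos hgap (by positivity)).trans_le hc₁θ
  set r := (a - μ₀) / (4 * c₁) with hr_def
  set α := (a - μ₀) ^ 2 / (16 * c₁) with hα_def
  have hr : 0 < r := by positivity
  have hα : 0 < α := by positivity
  have hrθ : r ≤ θa := by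
    rw [div_le_iff₀ (by positivity)] at hc₁θ ⊢
    linarith
  have hK : 2 * α ≤ Ψ θa - Ψ r - Ψ (θa - r) := by
    have := sq_div_le_sub_sub_of_deriv2_le (fun θ hθ => hderiv1 θ (hsub hθ))
      (fun θ hθ => hderiv2 θ (hsub hθ))
      (fun θ hθ => hc₁ ▸ le_max_sSup_image_of_mem isCompact_Icc hcont _ hθ) hc₁pos
      (by linarith) (by rwa [hΨ'θa, hΨ'0])
    rw [hΨ'θa, hΨ'0, hΨ0, ← hr_def] at this
    linarith [show (a - μ₀) ^ 2 / (8 * c₁) = 2 * α by rw [hα_def]; field_simp; ring]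
  have tail : ∀ i : ℕ, (P {ω | D i ω < m * (μ₀ - a) / 4}).toReal ≤ exp (-α * i - α * m) :=
    fun i => calc
      _ ≤ P.real {ω | ∑ j ∈ range i, ξ j ω ≤ m * (μ₀ - a) / 4} :=
          measureReal_mono fun ω hω => by rw [mem_ofPred_eq, hD] at hω; exact hω.le
      _ ≤ exp (r * (m * (μ₀ - a) / 4) - (Ψ θa - Ψ r - Ψ (θa - r)) * #(range i)) :=
          measureReal_sum_le_le_exp hindep hmeas hr.le (fun j => hmgf j r hr hrθ) _ _
      _ ≤ exp (-α * i - α * m) := by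
          have hrm : r * (m * (μ₀ - a) / 4) = -(α * m) := by
            rw [hr_def, hα_def]; field_simp; ring
          have hKi := mul_le_mul_of_nonneg_right hK (Nat.cast_nonneg (α := ℝ) i)
          rw [card_range, exp_le_exp, hrm]
          linarith [mul_nonneg hα.le (Nat.cast_nonneg (α := ℝ) i)]
  have hαm : -(a - μ₀) ^ 2 * m / (16 * c₁) = -(α * m) := by rw [hα_def]; ring
  refine ⟨fun i _ => (tail i).trans_eq ?_, ?_⟩
  · rw [hα_def]; ring_nf
  rw [hαm]
  exact tsum_le_exp_div_exp_sub_one hα (fun _ => ENNReal.toReal_nonneg)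
    fun i => (tail (i + 1)).trans_eq (by push_cast; ring_nf)

/-- In the same setting as Statement 4, for every i ≥ 1 and positive
integer m, P(Dᵢ < m(μ₀−a)/4) ≤ exp(−(a−μ₀)²·i/(16c₁) − (a−μ₀)²·m/(16c₁)), and hence
∑_{i=1}^∞ P(Dᵢ < m(μ₀−a)/4) ≤ exp(−(a−μ₀)²·m/(16c₁)) / (exp((a−μ₀)²/(16c₁)) − 1). -/
theorem stmt5 {Ω : Type*} [MeasurableSpace Ω] (P : Measure Ω) [IsProbabilityMeasure P]
    (Θ : Set ℝ) (hopen : IsOpen Θ) (hconv : Convex ℝ Θ)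
    (Ψ Ψ' Ψ'' : ℝ → ℝ) (μ₀ a θa : ℝ)
    (hsub : Set.Icc 0 θa ⊆ Θ)
    (hderiv1 : ∀ θ ∈ Θ, HasDerivAt Ψ (Ψ' θ) θ)
    (hderiv2 : ∀ θ ∈ Θ, HasDerivAt Ψ' (Ψ'' θ) θ)
    (hpos : ∀ θ ∈ Θ, 0 < Ψ'' θ)
    (hcont : ContinuousOn Ψ'' (Set.Icc 0 θa))
    (hΨ0 : Ψ 0 = 0) (hΨ'0 : Ψ' 0 = μ₀) (hΨ'θa : Ψ' θa = a)
    (ha : μ₀ < a) (hθa : 0 < θa)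
    (ξ : ℕ → Ω → ℝ) (hmeas : ∀ i, Measurable (ξ i))
    (hindep : iIndepFun ξ P)
    (hident : ∀ i, Measure.map (ξ i) P = Measure.map (ξ 0) P)
    (hmgf : ∀ i, ∀ r : ℝ, 0 < r → r ≤ θa →
      mgf (ξ i) P (-r) = exp (-(Ψ θa - Ψ r - Ψ (θa - r))))
    (D : ℕ → Ω → ℝ) (hD : ∀ k ω, D k ω = ∑ i ∈ Finset.range k, ξ i ω)
    (m : ℕ) (hm : 1 ≤ m)
    (c₁ : ℝ) (hc₁ : c₁ = max ((a - μ₀) / (4 * θa)) (sSup (Ψ'' '' Set.Icc 0 θa))) :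
    (∀ i : ℕ, 1 ≤ i →
        (P {ω | D i ω < m * (μ₀ - a) / 4}).toReal ≤
          exp (-(a - μ₀) ^ 2 * i / (16 * c₁) - (a - μ₀) ^ 2 * m / (16 * c₁))) ∧
      (∑' i : ℕ, (P {ω | D (i + 1) ω < m * (μ₀ - a) / 4}).toReal) ≤
        exp (-(a - μ₀) ^ 2 * m / (16 * c₁)) / (exp ((a - μ₀) ^ 2 / (16 * c₁)) - 1) :=
  stmt5_general P Θ Ψ Ψ' Ψ'' μ₀ a θa hsub hderiv1 hderiv2 hcont hΨ0 hΨ'0 hΨ'θa ha hθa ξ hmeas hindep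
    hmgf D hD m c₁ hc₁
end

section
/- Let X₁, …, Xₙ be i.i.d. integer-valued random variables and let a = sup{x : P(X₁ = x) > 0} be finite, with p_a = P(X₁ = a) ∈ (0,1). For an integer t < n define M_{n;t} = max_{1≤i≤n−t+1}(X_i + ⋯ + X_{i+t−1}). Then M_{n;t} ≥ a·t if and only if there is a run of t consecutive indices i with X_i = a, and with λ = (n−t)·p_a^t·(1−p_a) + p_a^t one has |P(M_{n;t} ≥ a·t) − (1 − e^{−λ})| ≤ C·(λ ∧ 1)·e^{−c·t} for constants C, c depending only on p_a. -/
/-!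
When every `X j` is at most `a`, a window of length `t` has sum `a * t` exactly when all its
values equal `a`, so almost surely `M ≥ a t` iff some window is a run of `a`'s, and the
probability in question is `1 - w n`, where `w m` is the probability of no run among
`X 1, …, X m`. A run first completed at time `m + t + 1` is preceded by a value `≠ a` at
`m + 1`, and independence gives the renewal recurrence
`w (m + t + 1) = w (m + t) - p^t (1 - p) w m` with `w t = 1 - p^t`.
Comparing consecutive terms, `w (k + t + 1) / w (k + t)` lies between `1 - x` and `1 - y`,
where `x = p^t (1 - p)` and `y = x (1 + O(t p^t))`; hence `w n` is within a factor
`exp (O(t p^t) λ)` of `exp (-λ)`, and the error is `O(t p^t min λ 1)`. When `t p^t` is not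
small, the trivial bounds `1 - λ ≤ w n ≤ exp (-λ)` already suffice. Finally
`t p^t ≤ exp (-c t) / c` for `c = -log p / 2`.
-/

open MeasureTheory ProbabilityTheory Real

lemma mul_le_succ_of_sub_mul_le {v : ℕ → ℝ} {b y : ℝ} {t : ℕ} (hv : ∀ k, 0 ≤ v k)
    (hy0 : 0 ≤ y) (hy1 : y ≤ 1) (hb : b ≤ y * (1 - y) ^ t)
    (hrec : ∀ k, v k - b * v (k - t) ≤ v (k + 1)) (k : ℕ) :
    (1 - y) * v k ≤ v (k + 1) := by
  induction k using Nat.strong_induction_on with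
  | _ k ih =>
    have hgeom := geom_le (u := fun i => v (k - t + i)) (sub_nonneg.2 hy1) (k - (k - t))
      fun i hi => by simpa only [add_assoc] using ih (k - t + i) (by omega)
    simp only [add_zero, show k - t + (k - (k - t)) = k by omega] at hgeom
    have hchain : (1 - y) ^ t * v (k - t) ≤ v k :=
      (mul_le_mul_of_nonneg_right (pow_le_pow_of_le_one (sub_nonneg.2 hy1) (by linarith)
        (by omega)) (hv _)).trans hgeom
    nlinarith [hrec k, mul_le_mul_of_nonneg_right hb (hv (k - t)),
      mul_le_mul_of_nonneg_left hchain hy0]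

lemma exp_neg_add_two_mul_sq_le_one_sub {y : ℝ} (hy : y ≤ 1 / 2) :
    exp (-(y + 2 * y ^ 2)) ≤ 1 - y := by
  have hdiv : y / (1 - y) ≤ y + 2 * y ^ 2 := by
    rw [div_le_iff₀ (by linarith)]; nlinarith
  have hexp : 1 / (1 - y) ≤ exp (y / (1 - y)) := by
    have := add_one_le_exp (y / (1 - y))
    rwa [div_add_one (by linarith), add_sub_cancel] at this
  calc exp (-(y + 2 * y ^ 2)) ≤ exp (-(y / (1 - y))) := exp_le_exp.2 (by linarith)
    _ = (exp (y / (1 - y)))⁻¹ := exp_neg _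
    _ ≤ (1 / (1 - y))⁻¹ := inv_anti₀ (one_div_pos.2 (by linarith)) hexp
    _ = 1 - y := by rw [one_div, inv_inv]

lemma exp_neg_sub_le_mul_min {l Δ ε W : ℝ} (hl : 0 ≤ l) (hε : 0 ≤ ε)
    (hW : exp (-(l + Δ)) ≤ W) (hΔ : Δ ≤ ε * l) : exp (-l) - W ≤ ε * min l 1 := by
  have hle : l * exp (-l) ≤ min l 1 := by
    refine le_min (mul_le_of_le_one_right hl (exp_le_one_iff.2 (by linarith))) ?_
    rw [exp_neg, ← div_eq_mul_inv, div_le_one (exp_pos l)]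
    linarith [add_one_le_exp l]
  have h1 : 1 - exp (-Δ) ≤ Δ := by linarith [add_one_le_exp (-Δ)]
  calc exp (-l) - W ≤ exp (-l) * (1 - exp (-Δ)) := by
        rw [neg_add, exp_add] at hW; linarith
    _ ≤ exp (-l) * (ε * l) := mul_le_mul_of_nonneg_left (h1.trans hΔ) (exp_pos _).le
    _ = ε * (l * exp (-l)) := by ring
    _ ≤ ε * min l 1 := mul_le_mul_of_nonneg_left hle hε

lemma exp_neg_sub_le_min {l W : ℝ} (hl : 0 ≤ l) (hW0 : 0 ≤ W) (hW : 1 - l ≤ W) :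
    exp (-l) - W ≤ min l 1 := by
  have := exp_le_one_iff.2 (neg_nonpos.2 hl)
  exact le_min (by linarith) (by linarith)

lemma natCast_mul_pow_le_exp_neg_div {p : ℝ} (hp0 : 0 < p) (hp1 : p < 1) (t : ℕ) :
    t * p ^ t ≤ exp (-(-log p / 2 * t)) / (-log p / 2) := by
  set c := -log p / 2 with hc_def
  have hc : 0 < c := by linarith [log_neg hp0 hp1]
  have hpow : p ^ t = exp (-(c * t)) * exp (-(c * t)) := by
    rw [← exp_add, ← exp_log (pow_pos hp0 t), log_pow, hc_def]; ring_nf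
  have hct : c * t * exp (-(c * t)) ≤ 1 := by
    rw [exp_neg, ← div_eq_mul_inv, div_le_one (exp_pos _)]
    linarith [add_one_le_exp (c * t)]
  rw [le_div_iff₀ hc, hpow]
  nlinarith [exp_pos (-(c * t))]

section Recurrence

variable {w : ℕ → ℝ} {x q : ℝ} {t : ℕ}

lemma le_exp_neg_of_recurrence (hanti : Antitone w) (hwt : w t = 1 - q)
    (hrec : ∀ k, w (k + t + 1) = w (k + t) - x * w k) (hx0 : 0 ≤ x) (hx1 : x ≤ 1) (hq1 : q ≤ 1)
    (N : ℕ) : w (N + t) ≤ exp (-(N * x + q)) := by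
  have hgeom : w (N + t) ≤ (1 - x) ^ N * w (0 + t) :=
    le_geom (u := fun k => w (k + t)) (by linarith) N fun k _ => by
      have := hanti (Nat.le_add_right k t)
      rw [show k + 1 + t = k + t + 1 by omega, hrec k]; nlinarith
  have hpow : (1 - x) ^ N ≤ exp (-(N * x)) := by
    rw [show -(N * x) = N * -x by ring, exp_nat_mul]
    exact pow_le_pow_left₀ (by linarith) (by linarith [add_one_le_exp (-x)]) N
  rw [zero_add, hwt] at hgeom
  calc w (N + t) ≤ (1 - x) ^ N * (1 - q) := hgeom
    _ ≤ exp (-(N * x)) * exp (-q) :=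
      mul_le_mul hpow (by linarith [add_one_le_exp (-q)]) (by linarith) (exp_pos _).le
    _ = exp (-(N * x + q)) := by rw [← exp_add, neg_add]

lemma one_sub_le_of_recurrence (hw1 : ∀ k, w k ≤ 1) (hwt : w t = 1 - q)
    (hrec : ∀ k, w (k + t + 1) = w (k + t) - x * w k) (hx0 : 0 ≤ x) (N : ℕ) :
    1 - (N * x + q) ≤ w (N + t) := by
  induction N with
  | zero => simp [hwt]
  | succ N ih =>
    rw [show N + 1 + t = N + t + 1 by omega, hrec]
    push_cast
    nlinarith [hw1 N]

lemma exp_neg_le_of_recurrence (hw0 : ∀ k, 0 ≤ w k) (hw1 : ∀ k, w k ≤ 1) (hwt : w t = 1 - q)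
    (hrec : ∀ k, w (k + t + 1) = w (k + t) - x * w k) (hx0 : 0 ≤ x) (hxq : x ≤ q) (hq0 : 0 ≤ q)
    (ht : 0 < t) (hsmall : t * q ≤ 1 / 16) (N : ℕ) :
    exp (-((N * x + q) + 12 * (t * q) * (N * x + q))) ≤ w (N + t) := by
  set s : ℝ := t * q with hs
  have hqs : q ≤ s := le_mul_of_one_le_left hq0 (by exact_mod_cast ht)
  have htx : t * x ≤ s := mul_le_mul_of_nonneg_left hxq (Nat.cast_nonneg t)
  -- `y` is just large enough for the ratio bound below, yet `y - x = O(t q x)`.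
  set y := x * (1 + 4 * s) with hy
  have hy0 : 0 ≤ y := by positivity
  have hy2 : y ≤ 2 * x := by nlinarith
  have hyq : y ≤ 2 * q := by linarith
  have hb : x / (1 - q) ≤ y * (1 - y) ^ t := by
    have hbern : 1 - t * y ≤ (1 - y) ^ t := by
      simpa [sub_eq_add_neg] using one_add_mul_le_pow (a := -y) (by linarith) t
    have key : 1 ≤ (1 - q) * (1 + 4 * s) * (1 - t * x * (1 + 4 * s)) := by
      have hs0 : 0 ≤ s := hq0.trans hqs
      have h1 : 1 + 3 * s - 4 * s ^ 2 ≤ (1 - q) * (1 + 4 * s) := by nlinarith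
      have h2 : 1 - s - 4 * s ^ 2 ≤ 1 - t * x * (1 + 4 * s) := by nlinarith
      nlinarith [mul_le_mul h1 h2 (by nlinarith) (by nlinarith)]
    rw [div_le_iff₀ (by linarith)]
    calc x ≤ x * ((1 - q) * (1 + 4 * s) * (1 - t * x * (1 + 4 * s))) :=
          le_mul_of_one_le_right hx0 key
      _ = y * (1 - t * y) * (1 - q) := by rw [hy]; ring
      _ ≤ y * (1 - y) ^ t * (1 - q) := by gcongr; linarith
  -- The shifted sequence `w (k + t)` satisfies the hypothesis of the ratio lemma with
  -- `b = x / (1 - q)`, because `w k ≤ 1 = w t / (1 - q)` for `k < t`.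
  have hratio := mul_le_succ_of_sub_mul_le (v := fun k => w (k + t)) (fun k => hw0 _) hy0
    (by linarith) hb fun k => by
      have hwv : (1 - q) * w k ≤ w (k - t + t) := by
        rcases lt_or_ge k t with hk | hk
        · rw [show k - t + t = t by omega, hwt]; nlinarith [hw1 k]
        · rw [Nat.sub_add_cancel hk]; nlinarith [hw0 k]
      have hx : x * w k ≤ x / (1 - q) * w (k - t + t) := by
        rw [div_mul_eq_mul_div, le_div_iff₀ (by linarith)]
        nlinarith
      simp only [show k + 1 + t = k + t + 1 by omega, hrec k]
      linarith
  have hgeom := geom_le (sub_nonneg.2 (by linarith : y ≤ 1)) N fun k _ => hratio k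
  simp only [zero_add, hwt] at hgeom
  have hpow : exp (-(N * (y + 2 * y ^ 2))) ≤ (1 - y) ^ N := by
    rw [← mul_neg, exp_nat_mul]
    exact pow_le_pow_left₀ (exp_pos _).le (exp_neg_add_two_mul_sq_le_one_sub (by linarith)) N
  have hqexp := exp_neg_add_two_mul_sq_le_one_sub (y := q) (by linarith)
  have hyy : y + 2 * y ^ 2 ≤ x + 12 * s * x := by nlinarith
  calc exp (-((N * x + q) + 12 * s * (N * x + q)))
      ≤ exp (-(N * (y + 2 * y ^ 2))) * exp (-(q + 2 * q ^ 2)) := by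
        rw [← exp_add]
        apply exp_le_exp.2
        nlinarith [mul_le_mul_of_nonneg_left hyy (Nat.cast_nonneg N)]
    _ ≤ (1 - y) ^ N * (1 - q) :=
        mul_le_mul hpow hqexp (exp_pos _).le (pow_nonneg (by linarith) N)
    _ ≤ w (N + t) := hgeom

lemma exp_neg_sub_mem_Icc_of_recurrence (hw0 : ∀ k, 0 ≤ w k) (hw1 : ∀ k, w k ≤ 1)
    (hanti : Antitone w) (hwt : w t = 1 - q) (hrec : ∀ k, w (k + t + 1) = w (k + t) - x * w k)
    (hx0 : 0 ≤ x) (hxq : x ≤ q) (hq1 : q ≤ 1) (ht : 0 < t) (N : ℕ) :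
    exp (-(N * x + q)) - w (N + t) ∈ Set.Icc 0 (16 * (t * q) * min (N * x + q) 1) := by
  have hq0 : 0 ≤ q := hx0.trans hxq
  have hl : 0 ≤ N * x + q := by positivity
  refine ⟨sub_nonneg.2 (le_exp_neg_of_recurrence hanti hwt hrec hx0 (hxq.trans hq1) hq1 N), ?_⟩
  have hmin : 0 ≤ min (N * x + q) 1 := le_min hl zero_le_one
  by_cases hsmall : t * q ≤ 1 / 16
  · calc exp (-(N * x + q)) - w (N + t) ≤ 12 * (t * q) * min (N * x + q) 1 :=
          exp_neg_sub_le_mul_min hl (by positivity)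
            (exp_neg_le_of_recurrence hw0 hw1 hwt hrec hx0 hxq hq0 ht hsmall N) le_rfl
      _ ≤ 16 * (t * q) * min (N * x + q) 1 := by gcongr; norm_num
  · calc exp (-(N * x + q)) - w (N + t) ≤ min (N * x + q) 1 :=
          exp_neg_sub_le_min hl (hw0 _) (one_sub_le_of_recurrence hw1 hwt hrec hx0 N)
      _ ≤ 16 * (t * q) * min (N * x + q) 1 := le_mul_of_one_le_left hmin (by linarith)

end Recurrence

section Runs

variable {Ω α : Type*} (X : ℕ → Ω → α) (a : α) (t : ℕ)

def runAt (i : ℕ) : Set Ω := {ω | ∀ j ∈ Finset.Ico i (i + t), X j ω = a}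

def noRun (m : ℕ) : Set Ω := {ω | ∀ i, 1 ≤ i → i + t ≤ m + 1 → ω ∉ runAt X a t i}

variable {X a t}

lemma runAt_eq_biInter (i : ℕ) : runAt X a t i = ⋂ j ∈ Finset.Ico i (i + t), X j ⁻¹' {a} := by
  ext; simp [runAt]

lemma noRun_self : noRun X a t t = (runAt X a t 1)ᶜ := by
  ext ω
  refine ⟨fun h => h 1 le_rfl (by omega), fun h i hi hit => ?_⟩
  obtain rfl : i = 1 := by omega
  exact h

lemma not_mem_noRun_iff {m : ℕ} (htm : t ≤ m) {ω : Ω} :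
    ω ∉ noRun X a t m ↔ ∃ i ∈ Finset.Icc 1 (m - t + 1), ∀ j ∈ Finset.Ico i (i + t), X j ω = a := by
  simp only [noRun, Set.mem_ofPred_eq, not_forall, not_not, Finset.mem_Icc, exists_prop]
  exact exists_congr fun i => ⟨fun ⟨h1, h2, h⟩ => ⟨⟨h1, by omega⟩, h⟩,
    fun ⟨⟨h1, h2⟩, h⟩ => ⟨h1, by omega, h⟩⟩

lemma noRun_antitone : Antitone (noRun X a t) :=
  fun _ _ hmn _ h i hi hit => h i hi (by omega)

lemma noRun_add_succ (m : ℕ) :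
    noRun X a t (m + t + 1) = noRun X a t (m + t) \ runAt X a t (m + 2) := by
  ext ω
  refine ⟨fun h => ⟨noRun_antitone (by omega) h, h (m + 2) (by omega) (by omega)⟩,
    fun ⟨h, hrun⟩ i hi hit => ?_⟩
  rcases Nat.lt_or_ge (i + t) (m + t + 2) with hlt | hge
  · exact h i hi (by omega)
  · obtain rfl : i = m + 2 := by omega
    exact hrun

lemma noRun_inter_runAt (ht : 0 < t) (m : ℕ) :
    noRun X a t (m + t) ∩ runAt X a t (m + 2)
      = noRun X a t m ∩ ({ω | X (m + 1) ω ≠ a} ∩ runAt X a t (m + 2)) := by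
  ext ω
  simp only [Set.mem_inter_iff]
  constructor
  · rintro ⟨h, hrun⟩
    refine ⟨noRun_antitone (by omega) h, fun hm => h (m + 1) (by omega) (by omega) ?_, hrun⟩
    intro j hj
    rcases Nat.eq_or_lt_of_le (Finset.mem_Ico.1 hj).1 with rfl | hlt
    · exact hm
    · exact hrun j (Finset.mem_Ico.2 ⟨by omega, by have := (Finset.mem_Ico.1 hj).2; omega⟩)
  · rintro ⟨h, hm, hrun⟩
    refine ⟨fun i hi hit hi' => ?_, hrun⟩
    rcases Nat.lt_or_ge (i + t) (m + 2) with hlt | hge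
    · exact h i hi (by omega) hi'
    · exact hm (hi' (m + 1) (Finset.mem_Ico.2 ⟨by omega, by omega⟩))

end Runs

section Measurability

variable {Ω α : Type*} [mα : MeasurableSpace α] {X : ℕ → Ω → α}

lemma measurableSet_preimage_iSup {S : Set ℕ} {j : ℕ} (hj : j ∈ S) {B : Set α}
    (hB : MeasurableSet B) : MeasurableSet[⨆ k ∈ S, mα.comap (X k)] (X j ⁻¹' B) :=
  le_iSup₂ (f := fun k (_ : k ∈ S) => mα.comap (X k)) j hj _ ⟨B, hB, rfl⟩

variable [MeasurableSingletonClass α] {a : α} {t : ℕ}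

lemma measurableSet_runAt_iSup {S : Set ℕ} {i : ℕ} (hS : ∀ j ∈ Finset.Ico i (i + t), j ∈ S) :
    MeasurableSet[⨆ k ∈ S, mα.comap (X k)] (runAt X a t i) := by
  rw [runAt_eq_biInter]
  exact Finset.measurableSet_biInter _ fun j hj =>
    measurableSet_preimage_iSup (hS j hj) (measurableSet_singleton a)

lemma measurableSet_noRun_iSup (m : ℕ) :
    MeasurableSet[⨆ k ∈ Set.Iic m, mα.comap (X k)] (noRun X a t m) := by
  have : noRun X a t m = ⋂ i, ⋂ (_ : 1 ≤ i ∧ i + t ≤ m + 1), (runAt X a t i)ᶜ := by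
    ext; simp [noRun, and_imp]
  rw [this]
  refine MeasurableSet.iInter fun i => MeasurableSet.iInter fun hi => ?_
  exact (measurableSet_runAt_iSup fun j hj => by
    simp only [Finset.mem_Ico] at hj; simp only [Set.mem_Iic]; omega).compl

end Measurability

section Independence

variable {Ω α : Type*} [MeasurableSpace Ω] [mα : MeasurableSpace α] {X : ℕ → Ω → α}

lemma iSup_comap_le (hmeas : ∀ j, Measurable (X j)) (S : Set ℕ) :
    (⨆ k ∈ S, mα.comap (X k)) ≤ ‹MeasurableSpace Ω› :=
  iSup₂_le fun j _ => (hmeas j).comap_le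

variable {P : Measure Ω}

lemma measureReal_inter_eq_mul_of_disjoint (hmeas : ∀ j, Measurable (X j))
    (hindep : iIndepFun X P) {S T : Set ℕ} (hST : Disjoint S T) {A B : Set Ω}
    (hA : MeasurableSet[⨆ k ∈ S, mα.comap (X k)] A)
    (hB : MeasurableSet[⨆ k ∈ T, mα.comap (X k)] B) :
    P.real (A ∩ B) = P.real A * P.real B := by
  have h := (Indep_iff _ _ P).1
    (indep_iSup_of_disjoint (fun j => (hmeas j).comap_le) hindep.iIndep hST) A B hA hB
  simp only [measureReal_def, h, ENNReal.toReal_mul]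

variable [MeasurableSingletonClass α] {a : α} {t : ℕ} {p : ℝ}

lemma measurableSet_runAt (hmeas : ∀ j, Measurable (X j)) (i : ℕ) :
    MeasurableSet (runAt X a t i) :=
  iSup_comap_le hmeas _ _ (measurableSet_runAt_iSup fun _ _ => Set.mem_univ _)

lemma measurableSet_noRun (hmeas : ∀ j, Measurable (X j)) (m : ℕ) :
    MeasurableSet (noRun X a t m) :=
  iSup_comap_le hmeas _ _ (measurableSet_noRun_iSup m)

lemma measureReal_runAt (hindep : iIndepFun X P) (hatom : ∀ j, P.real (X j ⁻¹' {a}) = p)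
    (i : ℕ) : P.real (runAt X a t i) = p ^ t := by
  rw [runAt_eq_biInter, measureReal_def,
    hindep.measure_inter_preimage_eq_mul _ fun _ _ => measurableSet_singleton a,
    ENNReal.toReal_prod]
  simp only [← measureReal_def, hatom, Finset.prod_const, Nat.card_Ico, Nat.add_sub_cancel_left]

variable [IsProbabilityMeasure P]

lemma measureReal_noRun_self (hmeas : ∀ j, Measurable (X j)) (hindep : iIndepFun X P)
    (hatom : ∀ j, P.real (X j ⁻¹' {a}) = p) : P.real (noRun X a t t) = 1 - p ^ t := by
  rw [noRun_self, probReal_compl_eq_one_sub (measurableSet_runAt hmeas 1),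
    measureReal_runAt hindep hatom]

lemma measureReal_noRun_add_succ (hmeas : ∀ j, Measurable (X j)) (hindep : iIndepFun X P)
    (hatom : ∀ j, P.real (X j ⁻¹' {a}) = p) (ht : 0 < t) (m : ℕ) :
    P.real (noRun X a t (m + t + 1))
      = P.real (noRun X a t (m + t)) - p ^ t * (1 - p) * P.real (noRun X a t m) := by
  have hnot : MeasurableSet[⨆ k ∈ Set.Ioi m, mα.comap (X k)] {ω | X (m + 1) ω ≠ a} :=
    measurableSet_preimage_iSup (by simp) (measurableSet_singleton a).compl
  have hrun : ∀ S : Set ℕ, Set.Ioi (m + 1) ⊆ S →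
      MeasurableSet[⨆ k ∈ S, mα.comap (X k)] (runAt X a t (m + 2)) := fun S hS =>
    measurableSet_runAt_iSup fun j hj => hS (by simp only [Finset.mem_Ico] at hj; simp; omega)
  have hcompl : P.real {ω | X (m + 1) ω ≠ a} = 1 - p := by
    rw [← hatom (m + 1)]
    exact probReal_compl_eq_one_sub ((hmeas _) (measurableSet_singleton a))
  have hinter : P.real (noRun X a t (m + t) ∩ runAt X a t (m + 2))
      = p ^ t * (1 - p) * P.real (noRun X a t m) := by
    rw [noRun_inter_runAt ht, measureReal_inter_eq_mul_of_disjoint hmeas hindep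
        (Set.Iic_disjoint_Ioi le_rfl) (measurableSet_noRun_iSup m) (hnot.inter
          (hrun _ (Set.Ioi_subset_Ioi (Nat.le_succ m)))),
      measureReal_inter_eq_mul_of_disjoint (A := {ω | X (m + 1) ω ≠ a}) hmeas hindep
        (Set.Iic_disjoint_Ioi le_rfl)
        (measurableSet_preimage_iSup (by simp) (measurableSet_singleton a).compl)
        (hrun _ subset_rfl),
      hcompl, measureReal_runAt hindep hatom]
    ring
  rw [noRun_add_succ, ← measureReal_inter_add_sdiff (s := noRun X a t (m + t))
    (measurableSet_runAt hmeas _), hinter]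
  ring

lemma exp_neg_sub_measureReal_noRun_mem_Icc (hmeas : ∀ j, Measurable (X j))
    (hindep : iIndepFun X P) (hatom : ∀ j, P.real (X j ⁻¹' {a}) = p) (hp0 : 0 ≤ p) (hp1 : p ≤ 1)
    (ht : 0 < t) (N : ℕ) :
    exp (-(N * (p ^ t * (1 - p)) + p ^ t)) - P.real (noRun X a t (N + t))
      ∈ Set.Icc 0 (16 * (t * p ^ t) * min (N * (p ^ t * (1 - p)) + p ^ t) 1) :=
  exp_neg_sub_mem_Icc_of_recurrence (fun _ => measureReal_nonneg) (fun _ => measureReal_le_one)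
    (fun _ _ h => measureReal_mono (noRun_antitone h)) (measureReal_noRun_self hmeas hindep hatom)
    (measureReal_noRun_add_succ hmeas hindep hatom ht) (by positivity)
    (mul_le_of_le_one_right (by positivity) (by linarith)) (pow_le_one₀ hp0 hp1) ht N

lemma measureReal_eq_one_sub_noRun (hmeas : ∀ j, Measurable (X j)) {n : ℕ} (htn : t ≤ n)
    {E : Set Ω} (hE : ∀ᵐ ω ∂P,
      ω ∈ E ↔ ∃ i ∈ Finset.Icc 1 (n - t + 1), ∀ j ∈ Finset.Ico i (i + t), X j ω = a) :
    P.real E = 1 - P.real (noRun X a t n) := by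
  rw [← probReal_compl_eq_one_sub (measurableSet_noRun hmeas n)]
  refine measureReal_congr (Filter.eventuallyEq_set.2 ?_)
  filter_upwards [hE] with ω hω
  exact hω.trans (not_mem_noRun_iff htn).symm

end Independence

lemma card_nsmul_le_sum_iff_of_le {ι M : Type*} [AddCommMonoid M] [PartialOrder M]
    [IsOrderedCancelAddMonoid M] {s : Finset ι} {f : ι → M} {a : M} (h : ∀ i ∈ s, f i ≤ a) :
    s.card • a ≤ ∑ i ∈ s, f i ↔ ∀ i ∈ s, f i = a := by
  rw [← Finset.sum_const, ← Finset.sum_eq_sum_iff_of_le h]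
  exact ⟨fun h' => le_antisymm (Finset.sum_le_sum h) h', ge_of_eq⟩

lemma nsmul_le_sup'_sum_Ico_iff {M : Type*} [AddCommMonoid M] [LinearOrder M]
    [IsOrderedCancelAddMonoid M] {f : ℕ → M} {a : M} (hf : ∀ j, f j ≤ a) {t : ℕ}
    {s : Finset ℕ} (hs : s.Nonempty) :
    t • a ≤ s.sup' hs (fun i => ∑ j ∈ Finset.Ico i (i + t), f j)
      ↔ ∃ i ∈ s, ∀ j ∈ Finset.Ico i (i + t), f j = a := by
  rw [Finset.le_sup'_iff]
  refine exists_congr fun i => and_congr_right fun _ => ?_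
  rw [← card_nsmul_le_sum_iff_of_le fun j _ => hf j, Nat.card_Ico, Nat.add_sub_cancel_left]

/-- Corollary 2.1: For i.i.d. integer-valued X's whose supremum of
support a is attained with probability p_a ∈ (0,1), and M_{n;t} the maximal window
sum of length t < n: M_{n;t} ≥ a·t iff there is a run of t consecutive values equal
to a, and with λ = (n−t)p_a^t(1−p_a) + p_a^t,
|P(M_{n;t} ≥ at) − (1−e^{−λ})| ≤ C(λ∧1)e^{−ct} for constants C, c > 0 depending only
on p_a. -/
theorem stmt6 (pa : ℝ) (hpa : pa ∈ Set.Ioo (0 : ℝ) 1) :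
    ∃ C c : ℝ, 0 < C ∧ 0 < c ∧
      ∀ (Ω : Type) (_inst : MeasurableSpace Ω) (P : Measure Ω)
        (_hP : IsProbabilityMeasure P)
        (X : ℕ → Ω → ℤ) (a : ℤ) (n t : ℕ)
        (_hmeas : ∀ i, Measurable (X i))
        (_hindep : iIndepFun X P)
        (_hident : ∀ i, Measure.map (X i) P = Measure.map (X 0) P)
        (_hatom : ∀ i, (P {ω | X i ω = a}).toReal = pa)
        (_hsup : ∀ i, P {ω | a < X i ω} = 0)
        (ht : 0 < t) (htn : t < n)
        (M : Ω → ℤ)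
        (_hM : ∀ ω, M ω = (Finset.Icc 1 (n - t + 1)).sup'
          (Finset.nonempty_Icc.mpr (by omega))
          (fun i => ∑ j ∈ Finset.Ico i (i + t), X j ω))
        (lam : ℝ)
        (_hlam : lam = ((n - t : ℕ) : ℝ) * pa ^ t * (1 - pa) + pa ^ t),
        (∀ ω, (∀ j, X j ω ≤ a) →
          ((a * t ≤ M ω) ↔
            ∃ i ∈ Finset.Icc 1 (n - t + 1), ∀ j ∈ Finset.Ico i (i + t), X j ω = a)) ∧
        |(P {ω | a * t ≤ M ω}).toReal - (1 - exp (-lam))| ≤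
          C * min lam 1 * exp (-c * t) := by
  obtain ⟨hpa0, hpa1⟩ := hpa
  set c := -log pa / 2 with hc
  have hc0 : 0 < c := by linarith [log_neg hpa0 hpa1]
  refine ⟨16 / c, c, by positivity, hc0, ?_⟩
  intro Ω _ P _ X a n t hmeas hindep _ hatom hsup ht htn M hM lam hlam
  have hwindow : ∀ ω, (∀ j, X j ω ≤ a) → ((a * t ≤ M ω) ↔
      ∃ i ∈ Finset.Icc 1 (n - t + 1), ∀ j ∈ Finset.Ico i (i + t), X j ω = a) := fun ω hω => by
    rw [hM, mul_comm, ← nsmul_eq_mul, nsmul_le_sup'_sum_Ico_iff hω]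
  refine ⟨hwindow, ?_⟩
  have hbelow : ∀ᵐ ω ∂P, ∀ j, X j ω ≤ a :=
    ae_all_iff.2 fun j => ae_iff.2 (by simpa only [not_le] using hsup j)
  have hevent : P.real {ω | a * t ≤ M ω} = 1 - P.real (noRun X a t n) :=
    measureReal_eq_one_sub_noRun hmeas htn.le (by
      filter_upwards [hbelow] with ω hω using hwindow ω hω)
  obtain ⟨h0, hle⟩ :=
    exp_neg_sub_measureReal_noRun_mem_Icc hmeas hindep hatom hpa0.le hpa1.le ht (n - t)
  rw [Nat.sub_add_cancel htn.le, ← mul_assoc, ← hlam] at h0 hle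
  rw [← measureReal_def, hevent, show 1 - P.real (noRun X a t n) - (1 - exp (-lam))
    = exp (-lam) - P.real (noRun X a t n) by ring, abs_of_nonneg h0]
  calc exp (-lam) - P.real (noRun X a t n) ≤ 16 * (t * pa ^ t) * min lam 1 := hle
    _ ≤ 16 * (exp (-(c * t)) / c) * min lam 1 := by
        have hlam0 : 0 ≤ lam := by rw [hlam]; have := hpa1.le; positivity
        gcongr
        exact natCast_mul_pow_le_exp_neg_div hpa0 hpa1 t
    _ = 16 / c * min lam 1 * exp (-c * t) := by ring_nf
end

section
/- Let X₁, X₂, … be i.i.d. Bernoulli with P(Xᵢ=1)=μ₀ ∈ (0,1) and X₁^a, X₂^a, … i.i.d. Bernoulli with P(Xᵢ^a=1)=a, all independent, with μ₀ < a < 1. Let D_k = ∑_{i=1}^k (X_i^a − X_i). Then P(D_i > 0 for all i ≥ 1) = a − μ₀. -/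
/-!
Write `S k = ∑_{i<k} Z i` with `Z i = Xᵃᵢ - Xᵢ ∈ {-1, 0, 1}`. For a walk with integer steps
`≤ 1`, the cycle lemma says that exactly `max (S n) 0` of the `n` cyclic rotations of the first
`n` steps have all their partial sums positive. The steps are i.i.d., so every rotation has the
same law, and taking expectations gives `n · P(S₁, …, Sₙ > 0) = E[max (S n) 0]`. By the strong
law of large numbers in `L¹`, `E[max (S n / n) 0] → max (E Z₀) 0 = a - μ₀`, while the left-hand
side decreases to `P(Sₖ > 0 ∀ k ≥ 1)`.
-/

open MeasureTheory ProbabilityTheory Filter Topology Finset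

section CycleLemma

variable {n : ℕ}

/-- With `M r` the minimum of `S` on `[r, r + n)`, one has `M r = min (S r) (M (r + 1))` because
`S (r + n) ≥ S r`, and since `S` climbs by at most one per step the indicator of `r` is
`M (r + 1) - M r`, which telescopes to `M n - M 0 = m`. -/
theorem card_filter_forall_lt_add {m : ℤ} {S : ℕ → ℤ} (hn : 0 < n) (hm : 0 ≤ m)
    (hS1 : ∀ j, S (j + 1) ≤ S j + 1) (hSn : ∀ j, S (j + n) = S j + m) :
    (#{r ∈ range n | ∀ k < n, S r < S (r + (k + 1))} : ℤ) = m := by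
  have hne : (range n).Nonempty := nonempty_range_iff.mpr hn.ne'
  set M : ℕ → ℤ := fun r => (range n).inf' hne fun k => S (r + k) with hM
  have hM_le (r k : ℕ) (hk : k < n) : M r ≤ S (r + k) := inf'_le _ (mem_range.2 hk)
  have hM_succ (r : ℕ) : M r = min (S r) (M (r + 1)) := by
    refine le_antisymm (le_min (hM_le r 0 hn) (le_inf' _ _ fun k hk => ?_))
      (le_inf' _ _ fun k hk => ?_)
    · by_cases hk' : k + 1 < n
      · simpa [add_assoc, add_comm 1 k] using hM_le r (k + 1) hk'
      · rw [mem_range] at hk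
        rw [show r + 1 + k = r + n by omega, hSn]
        linarith [hM_le r 0 hn, show S (r + 0) = S r from rfl]
    · rcases k with _ | k
      · exact min_le_left _ _
      · exact (min_le_right _ _).trans
          (by simpa [add_assoc, add_comm 1 k] using hM_le (r + 1) k (by simp at hk; omega))
  have hM_period : M n = M 0 + m := by
    simp only [hM, zero_add, add_comm n, hSn]
    exact (map_finset_inf' (OrderIso.addRight m) hne S).symm
  have hstep (r : ℕ) :
      (if ∀ k < n, S r < S (r + (k + 1)) then (1 : ℤ) else 0) = M (r + 1) - M r := by
    have h_le := (hM_le (r + 1) 0 hn).trans (hS1 r)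
    have h_good : (∀ k < n, S r < S (r + (k + 1))) ↔ S r < M (r + 1) := by
      simp [hM, lt_inf'_iff, add_assoc, add_comm 1]
    rw [hM_succ r, if_congr h_good rfl rfl]
    split_ifs with h
    · rw [min_eq_left h.le]
      omega
    · rw [min_eq_right (not_lt.1 h), sub_self]
  rw [natCast_card_filter, sum_congr rfl fun r _ => hstep r, sum_range_sub, hM_period]
  ring

theorem Function.Periodic.sum_range_add_period {M : Type*} [AddCommMonoid M] {z : ℕ → M}
    (hz : Function.Periodic z n) (j : ℕ) :
    ∑ i ∈ range (j + n), z i = ∑ i ∈ range j, z i + ∑ i ∈ range n, z i := by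
  induction j with
  | zero => simp
  | succ j ih => rw [Nat.add_right_comm, sum_range_succ, ih, sum_range_succ, hz, add_right_comm]

theorem card_filter_forall_sum_range_pos {z : ℕ → ℤ} (hn : 0 < n)
    (hz : Function.Periodic z n) (hz1 : ∀ i, z i ≤ 1) :
    (#{r ∈ range n | ∀ k < n, 0 < ∑ i ∈ range (k + 1), z (r + i)} : ℤ) =
      max (∑ i ∈ range n, z i) 0 := by
  set S : ℕ → ℤ := fun j => ∑ i ∈ range j, z i
  have hshift (r k : ℕ) : ∑ i ∈ range k, z (r + i) = S (r + k) - S r := by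
    simp [S, sum_range_add]
  simp_rw [hshift, sub_pos]
  rcases lt_or_ge (S n) 0 with hm | hm
  · rw [max_eq_right hm.le, Nat.cast_eq_zero, card_eq_zero, filter_eq_empty_iff]
    intro r _ h
    have h_last := h (n - 1) (by omega)
    rw [Nat.sub_add_cancel hn] at h_last
    have h_period : S (r + n) = S r + S n := hz.sum_range_add_period r
    linarith
  · rw [max_eq_left hm]
    exact card_filter_forall_lt_add hn hm (fun j => by simpa [S, sum_range_succ] using hz1 j)
      hz.sum_range_add_period

theorem add_mod_injective (r : ℕ) : Function.Injective fun i : Fin n => (r + i) % n :=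
  fun i j h => Fin.ext <| (Nat.ModEq.add_left_cancel' r h).eq_of_lt_of_lt i.isLt j.isLt

theorem max_sum_range_eq_card_filter {x : ℕ → ℝ} (hn : 0 < n)
    (hx : ∀ i, ∃ k : ℤ, k ≤ 1 ∧ x i = k) :
    max (∑ i ∈ range n, x i) 0 =
      #{r ∈ range n | ∀ k < n, 0 < ∑ i ∈ range (k + 1), x ((r + i) % n)} := by
  choose z hz1 hxz using hx
  have hper : Function.Periodic (fun i => z (i % n)) n := fun i => by simp
  have hsum : ∑ i ∈ range n, x i = ((∑ i ∈ range n, z (i % n) : ℤ) : ℝ) := by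
    push_cast
    exact sum_congr rfl fun i hi => by rw [Nat.mod_eq_of_lt (mem_range.1 hi), hxz]
  simp_rw [hsum, hxz, ← Int.cast_sum, Int.cast_pos, ← Int.cast_natCast (R := ℝ),
    card_filter_forall_sum_range_pos hn hper fun i => hz1 _, Int.cast_max, Int.cast_zero]

end CycleLemma

theorem eq_indicator_of_zero_or_one {α : Type*} {Y : α → ℝ} (h01 : ∀ x, Y x = 0 ∨ Y x = 1) :
    Y = {x | Y x = 1}.indicator fun _ => 1 := by
  ext x
  rcases h01 x with h | h <;> simp [h]

theorem exists_int_sub_of_zero_or_one {x y : ℝ} (hx : x = 0 ∨ x = 1) (hy : y = 0 ∨ y = 1) :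
    ∃ k : ℤ, k ≤ 1 ∧ y - x = k := by
  rcases hx with rfl | rfl <;> rcases hy with rfl | rfl
  exacts [⟨0, by norm_num⟩, ⟨1, by norm_num⟩, ⟨-1, by norm_num⟩, ⟨0, by norm_num⟩]

section Probability

variable {Ω : Type*} [MeasurableSpace Ω] {P : Measure Ω}

section Bernoulli

theorem map_indicator_const_eq [IsFiniteMeasure P] {s t : Set Ω} (hs : MeasurableSet s)
    (ht : MeasurableSet t) (h : P s = P t) (c : ℝ) :
    P.map (s.indicator fun _ => c) = P.map (t.indicator fun _ => c) := by
  classical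
  ext u hu
  rw [Measure.map_apply (measurable_const.indicator hs) hu,
    Measure.map_apply (measurable_const.indicator ht) hu,
    Set.indicator_const_preimage_eq_union, Set.indicator_const_preimage_eq_union]
  split_ifs <;>
    simp [measure_compl hs (measure_ne_top _ _), measure_compl ht (measure_ne_top _ _), h]

variable {Y : Ω → ℝ}

theorem map_eq_map_of_zero_or_one [IsFiniteMeasure P] {Y' : Ω → ℝ} (hY : Measurable Y)
    (hY' : Measurable Y') (h01 : ∀ ω, Y ω = 0 ∨ Y ω = 1) (h01' : ∀ ω, Y' ω = 0 ∨ Y' ω = 1)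
    (h : P.real {ω | Y ω = 1} = P.real {ω | Y' ω = 1}) : P.map Y = P.map Y' := by
  rw [eq_indicator_of_zero_or_one h01, eq_indicator_of_zero_or_one h01']
  exact map_indicator_const_eq (hY (measurableSet_singleton 1)) (hY' (measurableSet_singleton 1))
    ((measureReal_eq_measureReal_iff (measure_ne_top _ _) (measure_ne_top _ _)).1 h) 1

theorem integrable_of_zero_or_one [IsFiniteMeasure P] (hY : Measurable Y)
    (h01 : ∀ ω, Y ω = 0 ∨ Y ω = 1) : Integrable Y P := by
  rw [eq_indicator_of_zero_or_one h01]
  exact (integrable_const 1).indicator (hY (measurableSet_singleton 1))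

theorem integral_eq_measureReal_of_zero_or_one (hY : Measurable Y)
    (h01 : ∀ ω, Y ω = 0 ∨ Y ω = 1) : ∫ ω, Y ω ∂P = P.real {ω | Y ω = 1} := by
  conv_lhs => rw [eq_indicator_of_zero_or_one h01]
  exact integral_indicator_one (hY (measurableSet_singleton 1))

end Bernoulli

section Independence

theorem iIndepFun.identDistrib_of_injective {κ ι β : Type*} [Fintype ι] [MeasurableSpace β]
    {f : κ → Ω → β} (hf : ∀ k, Measurable (f k)) (h : iIndepFun f P) {g g' : ι → κ}
    (hg : g.Injective) (hg' : g'.Injective) (hlaw : ∀ i, P.map (f (g i)) = P.map (f (g' i))) :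
    IdentDistrib (fun ω i => f (g i) ω) (fun ω i => f (g' i) ω) P P where
  aemeasurable_fst := (measurable_pi_lambda _ fun i => hf (g i)).aemeasurable
  aemeasurable_snd := (measurable_pi_lambda _ fun i => hf (g' i)).aemeasurable
  map_eq := by
    rw [(h.precomp hg).map_fun_eq_pi_map fun i => (hf _).aemeasurable,
      (h.precomp hg').map_fun_eq_pi_map fun i => (hf _).aemeasurable]
    simp_rw [hlaw]

variable {κ : Type*} {X Y : κ → Ω → ℝ}

theorem identDistrib_sub_of_iIndepFun {ι : Type*} [Fintype ι] (hX : ∀ k, Measurable (X k))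
    (hY : ∀ k, Measurable (Y k)) (hindep : iIndepFun (Sum.elim X Y) P)
    (hlawX : ∀ k l, P.map (X k) = P.map (X l)) (hlawY : ∀ k l, P.map (Y k) = P.map (Y l))
    {g g' : ι → κ} (hg : g.Injective) (hg' : g'.Injective) :
    IdentDistrib (fun ω i => Y (g i) ω - X (g i) ω) (fun ω i => Y (g' i) ω - X (g' i) ω) P P := by
  have hpairs := iIndepFun.identDistrib_of_injective (Sum.rec hX hY) hindep
    (g := Sum.map g g) (g' := Sum.map g' g') (hg.sumMap hg) (hg'.sumMap hg')
    (Sum.rec (fun _ => hlawX _ _) (fun _ => hlawY _ _))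
  exact hpairs.comp (measurable_pi_lambda _ fun i =>
    (measurable_pi_apply (Sum.inr i)).sub (measurable_pi_apply (Sum.inl i)))

theorem indepFun_sub_of_iIndepFun (hX : ∀ k, Measurable (X k)) (hY : ∀ k, Measurable (Y k))
    (hindep : iIndepFun (Sum.elim X Y) P) {k l : κ} (hkl : k ≠ l) :
    IndepFun (fun ω => Y k ω - X k ω) (fun ω => Y l ω - X l ω) P :=
  (hindep.indepFun_prodMk_prodMk (Sum.rec hX hY) (.inl k) (.inr k) (.inl l) (.inr l)
    (by simpa) (by simp) (by simp) (by simpa)).comp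
    (measurable_snd.sub measurable_fst) (measurable_snd.sub measurable_fst)

end Independence

section SkipFreeWalk

variable [IsProbabilityMeasure P] {Z : ℕ → Ω → ℝ}

theorem natCast_mul_measureReal_eq_integral_max {n : ℕ} (hn : 0 < n)
    (hmeas : ∀ i, Measurable (Z i)) (hZ : ∀ i ω, ∃ k : ℤ, k ≤ 1 ∧ Z i ω = k)
    (hcyc : ∀ r, IdentDistrib (fun ω (i : Fin n) => Z ((r + i) % n) ω) (fun ω i => Z i ω) P P) :
    n * P.real {ω | ∀ k < n, 0 < ∑ i ∈ range (k + 1), Z i ω} =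
      ∫ ω, max (∑ i ∈ range n, Z i ω) 0 ∂P := by
  set G : Set (Fin n → ℝ) :=
    {v | ∀ k < n, 0 < ∑ i ∈ range (k + 1), v ⟨i % n, Nat.mod_lt i hn⟩}
  have hG : MeasurableSet G := by measurability
  set E : ℕ → Set Ω := fun r => (fun ω (i : Fin n) => Z ((r + i) % n) ω) ⁻¹' G
  have hE_meas (r : ℕ) : MeasurableSet (E r) := (measurable_pi_lambda _ fun _ => hmeas _) hG
  have hE (r : ℕ) : P.real (E r) = P.real {ω | ∀ k < n, 0 < ∑ i ∈ range (k + 1), Z i ω} := by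
    rw [measureReal_def, (hcyc r).measure_mem_eq hG, ← measureReal_def]
    congr 1
    ext ω
    simp only [G, Set.mem_preimage, Set.mem_ofPred_eq]
    refine forall₂_congr fun k hk => ?_
    rw [sum_congr rfl fun i hi => by rw [Nat.mod_eq_of_lt (by simp at hi; omega)]]
  have hcount (ω : Ω) :
      max (∑ i ∈ range n, Z i ω) 0 = ∑ r ∈ range n, (E r).indicator (fun _ => (1 : ℝ)) ω := by
    rw [max_sum_range_eq_card_filter hn (hZ · ω), natCast_card_filter]
    refine sum_congr rfl fun r _ => ?_
    simp [E, G, Set.indicator_apply, Nat.add_mod_mod]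
  calc (n : ℝ) * P.real {ω | ∀ k < n, 0 < ∑ i ∈ range (k + 1), Z i ω}
      = ∑ r ∈ range n, P.real (E r) := by simp [hE]
    _ = ∫ ω, max (∑ i ∈ range n, Z i ω) 0 ∂P := by
      simp_rw [hcount]
      rw [integral_finsetSum _ fun r _ => (integrable_const 1).indicator (hE_meas r)]
      exact sum_congr rfl fun r _ => (integral_indicator_one (hE_meas r)).symm

theorem tendsto_integral_max_of_tendsto_eLpNorm {Y : ℕ → Ω → ℝ} {c : ℝ}
    (hY : ∀ n, Integrable (Y n) P)
    (h : Tendsto (fun n => eLpNorm (fun ω => Y n ω - c) 1 P) atTop (𝓝 0)) :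
    Tendsto (fun n => ∫ ω, max (Y n ω) 0 ∂P) atTop (𝓝 (max c 0)) := by
  have hlim := tendsto_integral_of_L1 (μ := P) (fun _ => max c 0) aestronglyMeasurable_const
    (Eventually.of_forall fun n => (hY n).pos_part) (F := fun n ω => max (Y n ω) 0)
    (l := atTop) ?_
  · simpa using hlim
  refine tendsto_of_tendsto_of_tendsto_of_le_of_le tendsto_const_nhds h (fun _ => zero_le)
    fun n => ?_
  rw [eLpNorm_one_eq_lintegral_enorm]
  refine lintegral_mono fun ω => ?_
  simp only [← ofReal_norm, Real.norm_eq_abs]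
  exact ENNReal.ofReal_le_ofReal (abs_max_sub_max_le_abs _ _ _)

theorem measureReal_forall_sum_range_pos (hmeas : ∀ i, Measurable (Z i))
    (hZ : ∀ i ω, ∃ k : ℤ, k ≤ 1 ∧ Z i ω = k) (hint : Integrable (Z 0) P)
    (hindep : ∀ i j, i ≠ j → IndepFun (Z i) (Z j) P)
    (hcyc : ∀ n r, IdentDistrib (fun ω (i : Fin n) => Z ((r + i) % n) ω) (fun ω i => Z i ω) P P) :
    P.real {ω | ∀ k, 0 < ∑ i ∈ range (k + 1), Z i ω} = max (∫ ω, Z 0 ω ∂P) 0 := by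
  have hident (i : ℕ) : IdentDistrib (Z i) (Z 0) P P := by
    have := (hcyc (i + 1) i).comp (measurable_pi_apply (0 : Fin (i + 1)))
    simpa [Function.comp_def, Nat.mod_eq_of_lt] using this
  set A : ℕ → Set Ω := fun n => {ω | ∀ k < n, 0 < ∑ i ∈ range (k + 1), Z i ω}
  have hA_meas (n : ℕ) : MeasurableSet (A n) := by measurability
  have hA_anti : Antitone A := fun m n hmn ω hω k hk => hω k (lt_of_lt_of_le hk hmn)
  have hA_iInter : ⋂ n, A n = {ω | ∀ k, 0 < ∑ i ∈ range (k + 1), Z i ω} := by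
    ext ω
    simp only [A, Set.mem_iInter, Set.mem_ofPred_eq]
    exact ⟨fun h k => h (k + 1) k (lt_add_one k), fun h n k _ => h k⟩
  have hlim_A : Tendsto (fun n => P.real (A n)) atTop (𝓝 (P.real (⋂ n, A n))) :=
    (ENNReal.tendsto_toReal (measure_ne_top _ _)).comp (tendsto_measure_iInter_atTop
      (fun n => (hA_meas n).nullMeasurableSet) hA_anti ⟨0, measure_ne_top _ _⟩)
  have hlim_int := tendsto_integral_max_of_tendsto_eLpNorm
    (Y := fun n ω => (n : ℝ)⁻¹ • ∑ i ∈ range n, Z i ω)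
    (fun n => (integrable_finsetSum _ fun i _ => (hident i).integrable_iff.2 hint).const_mul _)
    (strong_law_Lp le_rfl ENNReal.one_ne_top Z (memLp_one_iff_integrable.2 hint) hindep hident)
  have hA_eq : ∀ᶠ n : ℕ in atTop,
      ∫ ω, max ((n : ℝ)⁻¹ • ∑ i ∈ range n, Z i ω) 0 ∂P = P.real (A n) := by
    filter_upwards [eventually_gt_atTop 0] with n hn
    have hmax (s : ℝ) : max ((n : ℝ)⁻¹ • s) 0 = (n : ℝ)⁻¹ * max s 0 := by
      rw [smul_eq_mul, mul_max_of_nonneg _ _ (by positivity), mul_zero]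
    simp_rw [hmax]
    rw [integral_const_mul, ← natCast_mul_measureReal_eq_integral_max hn hmeas hZ (hcyc n),
      inv_mul_cancel_left₀ (by positivity)]
  rw [← hA_iInter]
  exact tendsto_nhds_unique hlim_A (hlim_int.congr' hA_eq)

end SkipFreeWalk

end Probability

theorem stmt9_general {Ω : Type*} [MeasurableSpace Ω] (P : Measure Ω) [IsProbabilityMeasure P]
    (μ₀ a : ℝ) (hμ₀a : μ₀ < a)
    (X Xa : ℕ → Ω → ℝ)
    (hmeasX : ∀ i, Measurable (X i)) (hmeasXa : ∀ i, Measurable (Xa i))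
    (hindep : iIndepFun (Sum.elim X Xa : ℕ ⊕ ℕ → Ω → ℝ) P)
    (hX01 : ∀ i ω, X i ω = 0 ∨ X i ω = 1)
    (hXa01 : ∀ i ω, Xa i ω = 0 ∨ Xa i ω = 1)
    (hX : ∀ i, (P {ω | X i ω = 1}).toReal = μ₀)
    (hXa : ∀ i, (P {ω | Xa i ω = 1}).toReal = a)
    (D : ℕ → Ω → ℝ) (hD : ∀ k ω, D k ω = ∑ i ∈ Finset.range k, (Xa i ω - X i ω)) :
    (P {ω | ∀ i : ℕ, 1 ≤ i → 0 < D i ω}).toReal = a - μ₀ := by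
  have hlawX (i j : ℕ) : P.map (X i) = P.map (X j) := map_eq_map_of_zero_or_one (hmeasX i)
    (hmeasX j) (hX01 i) (hX01 j) ((hX i).trans (hX j).symm)
  have hlawXa (i j : ℕ) : P.map (Xa i) = P.map (Xa j) := map_eq_map_of_zero_or_one (hmeasXa i)
    (hmeasXa j) (hXa01 i) (hXa01 j) ((hXa i).trans (hXa j).symm)
  have hcyc (n r : ℕ) := identDistrib_sub_of_iIndepFun hmeasX hmeasXa hindep hlawX hlawXa
    (g := fun i : Fin n => (r + i) % n) (g' := Fin.val) (add_mod_injective r) Fin.val_injective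
  have hintX := integrable_of_zero_or_one (P := P) (hmeasX 0) (hX01 0)
  have hintXa := integrable_of_zero_or_one (P := P) (hmeasXa 0) (hXa01 0)
  have hmean : ∫ ω, Xa 0 ω - X 0 ω ∂P = a - μ₀ := by
    rw [integral_sub hintXa hintX, integral_eq_measureReal_of_zero_or_one (hmeasXa 0) (hXa01 0),
      integral_eq_measureReal_of_zero_or_one (hmeasX 0) (hX01 0)]
    exact congr_arg₂ (· - ·) (hXa 0) (hX 0)
  have hset : {ω | ∀ i : ℕ, 1 ≤ i → 0 < D i ω} =
      {ω | ∀ k, 0 < ∑ i ∈ range (k + 1), (Xa i ω - X i ω)} := by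
    ext ω
    simp only [Set.mem_ofPred_eq, hD]
    exact ⟨fun h k => h (k + 1) (by omega),
      fun h i hi => by simpa [Nat.sub_add_cancel hi] using h (i - 1)⟩
  rw [hset, ← measureReal_def, measureReal_forall_sum_range_pos (Z := fun i ω => Xa i ω - X i ω)
    (fun i => (hmeasXa i).sub (hmeasX i))
    (fun i ω => exists_int_sub_of_zero_or_one (hX01 i ω) (hXa01 i ω)) (hintXa.sub hintX)
    (fun i j => indepFun_sub_of_iIndepFun hmeasX hmeasXa hindep) hcyc, hmean,
    max_eq_left (by linarith)]

/-- For independent Bernoulli sequences X (success prob μ₀) and X^a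
(success prob a), μ₀ < a, with D_k = ∑_{i=1}^k (X_i^a − X_i), one has
P(D_i > 0 for all i ≥ 1) = a − μ₀. -/
theorem stmt9 {Ω : Type*} [MeasurableSpace Ω] (P : Measure Ω) [IsProbabilityMeasure P]
    (μ₀ a : ℝ) (hμ₀ : 0 < μ₀) (hμ₀a : μ₀ < a) (ha : a < 1)
    (X Xa : ℕ → Ω → ℝ)
    (hmeasX : ∀ i, Measurable (X i)) (hmeasXa : ∀ i, Measurable (Xa i))
    (hindep : iIndepFun (Sum.elim X Xa : ℕ ⊕ ℕ → Ω → ℝ) P)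
    (hX01 : ∀ i ω, X i ω = 0 ∨ X i ω = 1)
    (hXa01 : ∀ i ω, Xa i ω = 0 ∨ Xa i ω = 1)
    (hX : ∀ i, (P {ω | X i ω = 1}).toReal = μ₀)
    (hXa : ∀ i, (P {ω | Xa i ω = 1}).toReal = a)
    (D : ℕ → Ω → ℝ) (hD : ∀ k ω, D k ω = ∑ i ∈ Finset.range k, (Xa i ω - X i ω)) :
    (P {ω | ∀ i : ℕ, 1 ≤ i → 0 < D i ω}).toReal = a - μ₀ :=
  stmt9_general P μ₀ a hμ₀a X Xa hmeasX hmeasXa hindep hX01 hXa01 hX hXa D hD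
end

section
/- Under Wald's likelihood ratio identity, in the setting of Theorem 2.2 with θ* ∈ (0, θ₁) such that Ψ(θ₁ − θ*) < 0, let τ₋ = inf{n : S_n < 0} and T_b = inf{n : S_n ∉ [0,b)}; then 0 ≤ P_{θ₁}(S_{T_b} ≥ b) − P_{θ₁}(τ₋ = ∞) ≤ ∑_{i=1}^∞ P_{θ₁}(S_i < −b) ≤ e^{−θ* b}·∑_{i=1}^∞ e^{Ψ(θ₁−θ*) i} = e^{−θ* b}·e^{Ψ(θ₁−θ*)}/(1 − e^{Ψ(θ₁−θ*)}). -/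
open MeasureTheory ProbabilityTheory Real Filter
open scoped ENNReal NNReal

private lemma identDistrib_add_aux {Ω : Type*} [MeasurableSpace Ω] {P : Measure Ω}
    [IsProbabilityMeasure P] {f g f' g' : Ω → ℝ}
    (hf : IdentDistrib f f' P P) (hg : IdentDistrib g g' P P)
    (hfg : IndepFun f g P) (hfg' : IndepFun f' g' P) :
    IdentDistrib (f + g) (f' + g') P P := by
  have hpair : IdentDistrib (fun ω => (f ω, g ω)) (fun ω => (f' ω, g' ω)) P P := by
    refine ⟨hf.aemeasurable_fst.prodMk hg.aemeasurable_fst,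
      hf.aemeasurable_snd.prodMk hg.aemeasurable_snd, ?_⟩
    rw [(indepFun_iff_map_prod_eq_prod_map_map hf.aemeasurable_fst hg.aemeasurable_fst).1 hfg,
      (indepFun_iff_map_prod_eq_prod_map_map hf.aemeasurable_snd hg.aemeasurable_snd).1 hfg',
      hf.map_eq, hg.map_eq]
  exact hpair.comp measurable_add

private lemma identDistrib_block_sum {Ω : Type*} [MeasurableSpace Ω] {P : Measure Ω}
    [IsProbabilityMeasure P] {X : ℕ → Ω → ℝ}
    (hmeas : ∀ i, Measurable (X i))
    (hindep : iIndepFun X P)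
    (hident : ∀ i, Measure.map (X i) P = Measure.map (X 0) P) :
    ∀ (n T : ℕ), IdentDistrib (∑ k ∈ Finset.Ico T (T + n), X k)
      (∑ k ∈ Finset.range n, X k) P P := by
  intro n
  induction n with
  | zero =>
    intro T
    simp only [Nat.add_zero, Finset.Ico_self, Finset.sum_empty, Finset.range_zero]
    exact IdentDistrib.refl aemeasurable_const
  | succ n ih =>
    intro T
    have h1 : ∑ k ∈ Finset.Ico T (T + (n + 1)), X k
        = (∑ k ∈ Finset.Ico T (T + n), X k) + X (T + n) := by
      rw [← Nat.add_assoc, Finset.sum_Ico_succ_top (Nat.le_add_right T n)]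
    have h2 : ∑ k ∈ Finset.range (n + 1), X k
        = (∑ k ∈ Finset.range n, X k) + X n := Finset.sum_range_succ X n
    rw [h1, h2]
    refine identDistrib_add_aux (ih T)
      ⟨(hmeas _).aemeasurable, (hmeas _).aemeasurable,
        (hident _).trans (hident _).symm⟩ ?_ ?_
    · exact hindep.indepFun_finset_sum_of_notMem hmeas (by simp)
    · exact hindep.indepFun_finset_sum_of_notMem hmeas (by simp)

/-- Under P_{θ₁} (positive drift μ₁, Ψ(θ₁)=0) with θ* ∈ (0,θ₁) and
Ψ(θ₁−θ*) < 0, for T_b the first exit time of S from [0,b) and τ₋ = inf{n : Sₙ < 0}: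
0 ≤ P(S_{T_b} ≥ b) − P(τ₋ = ∞) ≤ ∑_{i=1}^∞ P(S_i < −b)
  ≤ e^{−θ*b}·e^{Ψ(θ₁−θ*)}/(1 − e^{Ψ(θ₁−θ*)}). -/
theorem stmt15 {Ω : Type*} [MeasurableSpace Ω] (P : Measure Ω) [IsProbabilityMeasure P]
    (X : ℕ → Ω → ℝ) (Ψ : ℝ → ℝ) (θ₁ θs μ₁ b : ℝ)
    (hmeas : ∀ i, Measurable (X i))
    (hindep : iIndepFun X P)
    (hident : ∀ i, Measure.map (X i) P = Measure.map (X 0) P)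
    (hint : ∀ i, Integrable (X i) P)
    (hmean : ∀ i, ∫ ω, X i ω ∂P = μ₁) (hμ₁ : 0 < μ₁)
    (hθ₁ : 0 < θ₁) (hΨθ₁ : Ψ θ₁ = 0)
    (hθs : 0 < θs) (hθsθ₁ : θs < θ₁) (hΨneg : Ψ (θ₁ - θs) < 0)
    (hmgf : ∀ i, mgf (X i) P (-θs) = exp (Ψ (θ₁ - θs) - Ψ θ₁))
    (hb : 0 < b)
    (S : ℕ → Ω → ℝ) (hS : ∀ n ω, S n ω = ∑ k ∈ Finset.range n, X k ω) :
    0 ≤ (P {ω | ∃ n : ℕ, 1 ≤ n ∧ b ≤ S n ω ∧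
          ∀ k, 1 ≤ k → k < n → S k ω ∈ Set.Ico 0 b}).toReal -
        (P {ω | ∀ n : ℕ, 1 ≤ n → 0 ≤ S n ω}).toReal ∧
      (P {ω | ∃ n : ℕ, 1 ≤ n ∧ b ≤ S n ω ∧
          ∀ k, 1 ≤ k → k < n → S k ω ∈ Set.Ico 0 b}).toReal -
        (P {ω | ∀ n : ℕ, 1 ≤ n → 0 ≤ S n ω}).toReal ≤
        (∑' i : ℕ, (P {ω | S (i + 1) ω < -b}).toReal) ∧
      (∑' i : ℕ, (P {ω | S (i + 1) ω < -b}).toReal) ≤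
        exp (-θs * b) * exp (Ψ (θ₁ - θs)) / (1 - exp (Ψ (θ₁ - θs))) := by
  classical
  set A := {ω | ∃ n : ℕ, 1 ≤ n ∧ b ≤ S n ω ∧
      ∀ k, 1 ≤ k → k < n → S k ω ∈ Set.Ico 0 b} with hAdef
  set B := {ω | ∀ n : ℕ, 1 ≤ n → 0 ≤ S n ω} with hBdef
  set c := Ψ (θ₁ - θs) with hc
  set r := exp c with hrdef
  have hr0 : 0 < r := exp_pos c
  have hr1 : r < 1 := exp_lt_one_iff.mpr hΨneg
  have hSfun : ∀ n, S n = ∑ k ∈ Finset.range n, X k := by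
    intro n; funext ω; rw [hS]; simp
  have hSm : ∀ n, Measurable (S n) := by
    intro n
    have h : S n = fun ω => ∑ k ∈ Finset.range n, X k ω := funext (hS n)
    rw [h]
    exact Finset.measurable_sum _ fun i _ => hmeas i
  -- mgf facts
  have hmgf' : ∀ i, mgf (X i) P (-θs) = r := by
    intro i; rw [hmgf i, hΨθ₁, sub_zero]
  have hintexp : ∀ i, Integrable (fun ω => exp (-θs * X i ω)) P := by
    intro i
    by_contra h
    have h0 : mgf (X i) P (-θs) = 0 := integral_undef h
    rw [hmgf' i] at h0
    exact hr0.ne' h0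
  -- Chernoff bound for each partial sum
  have chern : ∀ n : ℕ, P {ω | S n ω < -b} ≤ ENNReal.ofReal (exp (-(θs * b)) * r ^ n) := by
    intro n
    have hintS : Integrable (fun ω => exp (-θs * (∑ k ∈ Finset.range n, X k) ω)) P :=
      hindep.integrable_exp_mul_sum hmeas fun i _ => hintexp i
    have hmgfS : mgf (∑ k ∈ Finset.range n, X k) P (-θs) = r ^ n := by
      rw [hindep.mgf_sum hmeas]
      simp [hmgf']
    have h1 : (P {ω | (∑ k ∈ Finset.range n, X k) ω ≤ -b}).toReal
        ≤ exp (-(-θs) * (-b)) * mgf (∑ k ∈ Finset.range n, X k) P (-θs) :=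
      measure_le_le_exp_mul_mgf (-b) (neg_nonpos.mpr hθs.le) hintS
    rw [hmgfS] at h1
    have h2 : (P {ω | S n ω ≤ -b}).toReal ≤ exp (-(θs * b)) * r ^ n := by
      have : -(-θs) * (-b) = -(θs * b) := by ring
      rw [this] at h1
      convert h1 using 3
      rw [hSfun n]
    calc P {ω | S n ω < -b} ≤ P {ω | S n ω ≤ -b} :=
          measure_mono (Set.setOf_subset_setOf.mpr fun ω hω => le_of_lt hω)
      _ = ENNReal.ofReal (P {ω | S n ω ≤ -b}).toReal :=
          (ENNReal.ofReal_toReal (measure_ne_top _ _)).symm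
      _ ≤ ENNReal.ofReal (exp (-(θs * b)) * r ^ n) := ENNReal.ofReal_le_ofReal h2
  -- the tail sum
  set Sig : ℝ≥0∞ := ∑' i : ℕ, P {ω | S (i + 1) ω < -b} with hSigdef
  have hsummable : Summable (fun i : ℕ => exp (-(θs * b)) * r ^ (i + 1)) := by
    have : (fun i : ℕ => exp (-(θs * b)) * r ^ (i + 1))
        = fun i : ℕ => (exp (-(θs * b)) * r) * r ^ i := by
      funext i; ring
    rw [this]
    exact (summable_geometric_of_lt_one hr0.le hr1).mul_left _
  have hsumval : ∑' i : ℕ, exp (-(θs * b)) * r ^ (i + 1)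
      = exp (-(θs * b)) * r / (1 - r) := by
    have h : (fun i : ℕ => exp (-(θs * b)) * r ^ (i + 1))
        = fun i : ℕ => (exp (-(θs * b)) * r) * r ^ i := by
      funext i; ring
    rw [h, tsum_mul_left, tsum_geometric_of_lt_one hr0.le hr1, div_eq_mul_inv]
  have hSigle : Sig ≤ ENNReal.ofReal (exp (-(θs * b)) * r / (1 - r)) := by
    calc Sig ≤ ∑' i : ℕ, ENNReal.ofReal (exp (-(θs * b)) * r ^ (i + 1)) :=
          ENNReal.tsum_le_tsum fun i => chern (i + 1)
      _ = ENNReal.ofReal (∑' i : ℕ, exp (-(θs * b)) * r ^ (i + 1)) :=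
          (ENNReal.ofReal_tsum_of_nonneg (fun i => by positivity) hsummable).symm
      _ = ENNReal.ofReal (exp (-(θs * b)) * r / (1 - r)) := by rw [hsumval]
  have hSigtop : Sig ≠ ⊤ := ne_top_of_le_ne_top ENNReal.ofReal_ne_top hSigle
  have hSigtoReal : Sig.toReal = ∑' i : ℕ, (P {ω | S (i + 1) ω < -b}).toReal :=
    ENNReal.tsum_toReal_eq fun i => measure_ne_top _ _
  -- the exit-time decomposition
  set AT : ℕ → Set Ω := fun n =>
    {ω | b ≤ S n ω ∧ ∀ k, 1 ≤ k → k < n → S k ω ∈ Set.Ico 0 b} with hATdef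
  have hATmeas : ∀ n, MeasurableSet (AT n) := by
    intro n
    have : AT n = {ω | b ≤ S n ω} ∩
        ⋂ (k : ℕ), ⋂ (_ : 1 ≤ k), ⋂ (_ : k < n), S k ⁻¹' Set.Ico 0 b := by
      ext ω; simp [hATdef, Set.mem_iInter]
    rw [this]
    exact (measurableSet_le measurable_const (hSm n)).inter
      (MeasurableSet.iInter fun k => MeasurableSet.iInter fun _ =>
        MeasurableSet.iInter fun _ => (hSm k) measurableSet_Ico)
  have hAeq : A = ⋃ T : ℕ, AT (T + 1) := by
    ext ω
    simp only [hAdef, hATdef, Set.mem_setOf_eq, Set.mem_iUnion]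
    constructor
    · rintro ⟨n, hn1, hn2, hn3⟩
      exact ⟨n - 1, by rw [Nat.sub_add_cancel hn1]; exact ⟨hn2, hn3⟩⟩
    · rintro ⟨T, h1, h2⟩
      exact ⟨T + 1, Nat.le_add_left 1 T, h1, h2⟩
  have hdisj : Pairwise (Function.onFun Disjoint fun T : ℕ => AT (T + 1)) := by
    have key : ∀ i j : ℕ, i < j → Disjoint (AT (i + 1)) (AT (j + 1)) := by
      intro i j hij
      rw [Set.disjoint_left]
      rintro ω ⟨hi1, _⟩ ⟨_, hj2⟩
      have := hj2 (i + 1) (Nat.le_add_left 1 i) (by omega)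
      exact absurd hi1 (not_le.mpr this.2)
    intro i j hij
    rcases lt_or_gt_of_ne hij with h | h
    · exact key i j h
    · exact (key j i h).symm
  have hPA : P A = ∑' T : ℕ, P (AT (T + 1)) := by
    rw [hAeq, measure_iUnion hdisj fun T => hATmeas (T + 1)]
  -- independence step
  have hkey : ∀ T i : ℕ,
      P (AT (T + 1) ∩ {ω | (∑ k ∈ Finset.Ico (T + 1) (T + 1 + (i + 1)), X k) ω < -b})
        = P (AT (T + 1)) * P {ω | S (i + 1) ω < -b} := by
    intro T i
    set s : Finset ℕ := Finset.range (T + 1) with hsdef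
    set t : Finset ℕ := Finset.Ico (T + 1) (T + 1 + (i + 1)) with htdef
    have hst : Disjoint s t := by
      rw [Finset.disjoint_left]
      intro a ha hat
      rw [hsdef, Finset.mem_range] at ha
      rw [htdef, Finset.mem_Ico] at hat
      omega
    have hIF : IndepFun (fun a (k : s) => X k a) (fun a (k : t) => X k a) P :=
      hindep.indepFun_finset s t hst hmeas
    -- M : the event AT (T+1) in terms of the first coordinates
    set F : (s → ℝ) → ℕ → ℝ := fun v n =>
      ∑ j ∈ Finset.range n, if h : j ∈ s then v ⟨j, h⟩ else 0 with hFdef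
    have hFmeas : ∀ n, Measurable fun v : s → ℝ => F v n := by
      intro n
      apply Finset.measurable_sum
      intro j _
      by_cases h : j ∈ s
      · simpa only [dif_pos h] using measurable_pi_apply (⟨j, h⟩ : s)
      · simp only [dif_neg h]; exact measurable_const
    set M : Set (s → ℝ) := {v | b ≤ F v (T + 1) ∧
        ∀ k, 1 ≤ k → k < T + 1 → F v k ∈ Set.Ico 0 b} with hMdef
    have hMmeas : MeasurableSet M := by
      have : M = {v | b ≤ F v (T + 1)} ∩
          ⋂ (k : ℕ), ⋂ (_ : 1 ≤ k), ⋂ (_ : k < T + 1),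
            (fun v => F v k) ⁻¹' Set.Ico 0 b := by
        ext v; simp [hMdef, Set.mem_iInter]
      rw [this]
      exact (measurableSet_le measurable_const (hFmeas (T + 1))).inter
        (MeasurableSet.iInter fun k => MeasurableSet.iInter fun _ =>
          MeasurableSet.iInter fun _ => (hFmeas k) measurableSet_Ico)
    have hFS : ∀ (ω : Ω) (n : ℕ), n ≤ T + 1 → F (fun k : s => X k ω) n = S n ω := by
      intro ω n hn
      rw [hS, hFdef]
      refine Finset.sum_congr rfl fun j hj => ?_
      have hjs : j ∈ s := by
        rw [hsdef, Finset.mem_range]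
        exact lt_of_lt_of_le (Finset.mem_range.mp hj) hn
      rw [dif_pos hjs]
    have hpreM : AT (T + 1) = (fun a (k : s) => X k a) ⁻¹' M := by
      ext ω
      simp only [hATdef, hMdef, Set.mem_preimage, Set.mem_setOf_eq]
      rw [hFS ω (T + 1) le_rfl]
      constructor
      · rintro ⟨h1, h2⟩
        exact ⟨h1, fun k hk1 hk2 => by rw [hFS ω k (le_of_lt hk2)]; exact h2 k hk1 hk2⟩
      · rintro ⟨h1, h2⟩
        refine ⟨h1, fun k hk1 hk2 => ?_⟩
        have := h2 k hk1 hk2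
        rwa [hFS ω k (le_of_lt hk2)] at this
    set N : Set (t → ℝ) := {w | ∑ j ∈ t.attach, w j < -b} with hNdef
    have hNmeas : MeasurableSet N :=
      measurableSet_lt (Finset.measurable_sum _ fun j _ => measurable_pi_apply j)
        measurable_const
    have hpreN : {ω | (∑ k ∈ t, X k) ω < -b} = (fun a (k : t) => X k a) ⁻¹' N := by
      ext ω
      simp only [hNdef, Set.mem_preimage, Set.mem_setOf_eq, Finset.sum_apply]
      rw [Finset.sum_attach t (fun j => X j ω)]
    rw [hpreM, hpreN, hIF.measure_inter_preimage_eq_mul M N hMmeas hNmeas]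
    congr 1
    -- identically distributed block sums
    have hid := identDistrib_block_sum hmeas hindep hident (i + 1) (T + 1)
    have h1 : (fun a (k : t) => X k a) ⁻¹' N = (∑ k ∈ t, X k) ⁻¹' Set.Iio (-b) := by
      rw [← hpreN]; ext ω; simp [Set.mem_setOf_eq]
    have h2 : {ω | S (i + 1) ω < -b} = (∑ k ∈ Finset.range (i + 1), X k) ⁻¹' Set.Iio (-b) := by
      ext ω; simp only [Set.mem_setOf_eq, Set.mem_preimage, Set.mem_Iio]
      rw [hSfun (i + 1)]
    rw [h1, h2]
    exact hid.measure_mem_eq measurableSet_Iio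
  -- the pathwise inclusion
  have hsub : ∀ T : ℕ, AT (T + 1) \ B ⊆ ⋃ i : ℕ, (AT (T + 1) ∩
      {ω | (∑ k ∈ Finset.Ico (T + 1) (T + 1 + (i + 1)), X k) ω < -b}) := by
    intro T ω hω
    obtain ⟨hAT, hB⟩ := hω
    rw [hBdef, Set.mem_setOf_eq] at hB
    push_neg at hB
    obtain ⟨m, hm1, hm2⟩ := hB
    obtain ⟨hAT1, hAT2⟩ := hAT
    have hmT : T + 1 < m := by
      by_contra h
      push_neg at h
      rcases eq_or_lt_of_le h with h' | h'
      · subst h'; linarith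
      · exact absurd (hAT2 m hm1 h').1 (not_le.mpr hm2)
    refine Set.mem_iUnion.mpr ⟨m - (T + 2), Set.mem_inter ⟨hAT1, hAT2⟩ ?_⟩
    have hm' : T + 1 + (m - (T + 2) + 1) = m := by omega
    rw [Set.mem_setOf_eq, hm', Finset.sum_apply]
    have hsum : ∑ k ∈ Finset.Ico (T + 1) m, X k ω = S m ω - S (T + 1) ω := by
      rw [hS, hS]
      exact Finset.sum_Ico_eq_sub _ (by omega)
    rw [hsum]
    linarith
  -- part 2 in ℝ≥0∞
  have hP2 : P (A \ B) ≤ Sig := by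
    calc P (A \ B) ≤ ∑' T : ℕ, P (AT (T + 1) \ B) := by
          rw [hAeq, Set.iUnion_diff]
          exact measure_iUnion_le _
      _ ≤ ∑' T : ℕ, ∑' i : ℕ, P (AT (T + 1) ∩
            {ω | (∑ k ∈ Finset.Ico (T + 1) (T + 1 + (i + 1)), X k) ω < -b}) :=
          ENNReal.tsum_le_tsum fun T =>
            (measure_mono (hsub T)).trans (measure_iUnion_le _)
      _ = ∑' T : ℕ, ∑' i : ℕ, P (AT (T + 1)) * P {ω | S (i + 1) ω < -b} := by
          congr 1; funext T; congr 1; funext i; exact hkey T i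
      _ = ∑' T : ℕ, P (AT (T + 1)) * Sig := by
          congr 1; funext T; rw [hSigdef, ENNReal.tsum_mul_left]
      _ = (∑' T : ℕ, P (AT (T + 1))) * Sig := ENNReal.tsum_mul_right
      _ = P A * Sig := by rw [hPA]
      _ ≤ 1 * Sig := mul_le_mul_left prob_le_one _
      _ = Sig := one_mul _
  have hPAB : P A ≤ P B + Sig :=
    calc P A ≤ P (A ∩ B) + P (A \ B) := measure_le_inter_add_diff P A B
      _ ≤ P B + Sig := add_le_add (measure_mono Set.inter_subset_right) hP2
  -- part 1 : P B ≤ P A via the strong law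
  have hslln := strong_law_ae_real X (hint 0)
    (fun i j hij => hindep.indepFun hij)
    (fun i => ⟨(hmeas i).aemeasurable, (hmeas 0).aemeasurable, hident i⟩)
  set G := {ω | ∃ n : ℕ, 1 ≤ n ∧ b ≤ S n ω} with hGdef
  have hae : ∀ᵐ ω ∂P, ω ∈ G := by
    filter_upwards [hslln] with ω hω
    have hPX0 : P[X 0] = μ₁ := hmean 0
    rw [hPX0] at hω
    have h2 : ∀ᶠ n : ℕ in atTop, μ₁ / 2 < (∑ i ∈ Finset.range n, X i ω) / n :=
      hω.eventually (eventually_gt_nhds (by linarith))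
    obtain ⟨n, hn2, hn1⟩ := (h2.and (eventually_ge_atTop (max 1 ⌈2 * b / μ₁⌉₊))).exists
    have hn1' : 1 ≤ n := le_trans (le_max_left _ _) hn1
    have hnceil : (⌈2 * b / μ₁⌉₊ : ℝ) ≤ n := by
      exact_mod_cast le_trans (le_max_right _ _) hn1
    have hnb : 2 * b / μ₁ ≤ (n : ℝ) := le_trans (Nat.le_ceil _) hnceil
    have hnpos : (0 : ℝ) < n := by
      have : (1 : ℝ) ≤ n := by exact_mod_cast hn1'
      linarith
    refine ⟨n, hn1', ?_⟩
    rw [hS]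
    have h3 : μ₁ / 2 * n < ∑ i ∈ Finset.range n, X i ω := by
      rw [lt_div_iff₀ hnpos] at hn2
      linarith [hn2]
    have h4 : b ≤ μ₁ / 2 * n := by
      have : μ₁ / 2 * (2 * b / μ₁) = b := by field_simp
      calc b = μ₁ / 2 * (2 * b / μ₁) := this.symm
        _ ≤ μ₁ / 2 * n := by
            apply mul_le_mul_of_nonneg_left hnb (by linarith)
    linarith
  have hBsub : B ∩ G ⊆ A := by
    rintro ω ⟨hB', hG'⟩
    rw [hGdef, Set.mem_setOf_eq] at hG'
    rw [hBdef, Set.mem_setOf_eq] at hB'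
    have hspec := Nat.find_spec hG'
    refine ⟨Nat.find hG', hspec.1, hspec.2, fun k hk1 hk2 => ?_⟩
    refine ⟨hB' k hk1, ?_⟩
    by_contra h
    push_neg at h
    exact Nat.find_min hG' hk2 ⟨hk1, h⟩
  have hP1 : P B ≤ P A := by
    have h0 : P Gᶜ = 0 := by
      have := ae_iff.mp hae
      simpa [Set.compl_def] using this
    calc P B ≤ P (B ∩ G) + P (B \ G) := measure_le_inter_add_diff P B G
      _ ≤ P A + P Gᶜ := add_le_add (measure_mono hBsub)
          (measure_mono fun ω hω => hω.2)
      _ = P A := by rw [h0, add_zero]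
  -- assemble
  have hPAtop : P A ≠ ⊤ := measure_ne_top _ _
  have hPBtop : P B ≠ ⊤ := measure_ne_top _ _
  refine ⟨?_, ?_, ?_⟩
  · exact sub_nonneg.mpr (ENNReal.toReal_mono hPAtop hP1)
  · have h1 : (P A).toReal ≤ (P B).toReal + Sig.toReal := by
      have := ENNReal.toReal_mono (by
        exact ENNReal.add_ne_top.mpr ⟨hPBtop, hSigtop⟩) hPAB
      rwa [ENNReal.toReal_add hPBtop hSigtop] at this
    rw [← hSigtoReal]
    linarith
  · rw [← hSigtoReal]
    have h1 : Sig.toReal ≤ (ENNReal.ofReal (exp (-(θs * b)) * r / (1 - r))).toReal :=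
      ENNReal.toReal_mono ENNReal.ofReal_ne_top hSigle
    rw [ENNReal.toReal_ofReal (div_nonneg (by positivity) (by linarith))] at h1
    calc Sig.toReal ≤ exp (-(θs * b)) * r / (1 - r) := h1
      _ = exp (-θs * b) * exp c / (1 - exp c) := by rw [neg_mul, hrdef]
end
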